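/- For an appropriate single-item DAG whose arcs encode per-slot decisions (enter cache with age 0, keep with incremented age, or stay out), with arc costs equal to minus the per-slot utility plus dual-price terms, the minimum-cost s–t path cost equals the minimum over all single-item caching columns of minus the reduced-cost objective; equivalently, the maximum reduced-cost column corresponds to a shortest path. -/

import Mathlib

/-!
Read a path from `n_0` slot by slot: the arc into `α_{t+1,0}` is an update, the arc
`α_{t,a} → α_{t+1,a+1}` keeps the item with its age incremented, the arcs through `n_t`
mean "not cached", and each arc costs exactly minus the slot's term of the objective.
Since `α_{t,a}` can only be reached with age `a` equal to the age induced by the updates,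
induction along the path produces a feasible column of the same (negated) value, and
induction over the slots turns a feasible column back into a path.
-/

/-- Nodes of the single-item subproblem DAG: `Sum.inl t` is the "not cached" node
`n_t` (end of slot `t`), `Sum.inr (t, a)` is the node `α_{t,a}` (cached in slot `t`
with age `a`). -/
abbrev SPNode := ℕ ⊕ (ℕ × ℕ)

/-- Arcs of the subproblem DAG: stay out (`n_t → n_{t+1}`), download
(`n_t → α_{t+1,0}`), keep with incremented age (`α_{t,a} → α_{t+1,a+1}`),
and leave the cache (`α_{t,a} → n_t`). -/
def spArc (T : ℕ) : SPNode → SPNode → Prop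
  | Sum.inl t, Sum.inl t' => t' = t + 1 ∧ t' ≤ T
  | Sum.inl t, Sum.inr (t', a) => t' = t + 1 ∧ t' ≤ T ∧ a = 0
  | Sum.inr (t, _), Sum.inl t' => t' = t
  | Sum.inr (t, a), Sum.inr (t', a') => t' = t + 1 ∧ t' ≤ T ∧ a' = a + 1

/-- Arc costs: minus the per-slot utility plus dual-price terms. -/
noncomputable def spCost (f : ℕ → ℝ) (s : ℝ) (pi mu : ℕ → ℝ) :
    SPNode → SPNode → ℝ
  | Sum.inl _, Sum.inl _ => 0
  | Sum.inl _, Sum.inr (t', _) => s * (pi t' + mu t') - f 0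
  | Sum.inr _, Sum.inl _ => 0
  | Sum.inr (_, a), Sum.inr (t', _) => s * pi t' - f (a + 1)

/-- Cost of a path (list of nodes). -/
noncomputable def spPathCost (c : SPNode → SPNode → ℝ) : List SPNode → ℝ
  | [] => 0
  | [_] => 0
  | x :: y :: r => c x y + spPathCost c (y :: r)

/-- Age implied by an update indicator. -/
def spAge (u : ℕ → Bool) : ℕ → ℕ
  | 0 => 0
  | t + 1 => if u (t + 1) then 0 else spAge u t + 1

/-- A feasible single-item column over slots `1,…,T`: updating requires caching, and
being cached requires either an update in the same slot or being cached in the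
previous slot. -/
def spFeasCol (T : ℕ) (b u : ℕ → Bool) : Prop :=
  (∀ t, 1 ≤ t → t ≤ T → (u t = true → b t = true)) ∧
  (∀ t, 1 ≤ t → t ≤ T → (b t = true → (u t = true ∨ (2 ≤ t ∧ b (t - 1) = true))))

/-- Reduced-cost objective of a column:
`∑_t f(a_t)·b_t − s·∑_t (π_t b_t + μ_t u_t)`. -/
noncomputable def spObj (T : ℕ) (f : ℕ → ℝ) (s : ℝ) (pi mu : ℕ → ℝ)
    (b u : ℕ → Bool) : ℝ :=
  ∑ t ∈ Finset.Icc 1 T,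
    ((if b t then f (spAge u t) - s * pi t else 0) - if u t then s * mu t else 0)

inductive SPReach (r : SPNode → SPNode → Prop) (c : SPNode → SPNode → ℝ) (x₀ : SPNode) :
    SPNode → ℝ → Prop
  | refl : SPReach r c x₀ x₀ 0
  | tail {x y : SPNode} {w : ℝ} : SPReach r c x₀ x w → r x y → SPReach r c x₀ y (w + c x y)

section Paths

variable {r : SPNode → SPNode → Prop} {c : SPNode → SPNode → ℝ} {x₀ : SPNode}

lemma spPathCost_concat {l : List SPNode} {x : SPNode} (hl : l.getLast? = some x)
    (y : SPNode) :
    spPathCost c (l ++ [y]) = spPathCost c l + c x y := by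
  induction l with
  | nil => simp at hl
  | cons a l ih =>
    cases l with
    | nil =>
      obtain rfl : a = x := by simpa using hl
      simp [spPathCost]
    | cons b l =>
      rw [List.getLast?_cons_cons] at hl
      simp only [List.cons_append, spPathCost] at ih ⊢
      rw [ih hl, add_assoc]

lemma spReach_of_isChain {p : List SPNode} {y z : SPNode} {w : ℝ}
    (hp : (y :: p).IsChain r) (hy : SPReach r c x₀ y w) (hz : (y :: p).getLast? = some z) :
    SPReach r c x₀ z (w + spPathCost c (y :: p)) := by
  induction p generalizing y w with
  | nil =>
    obtain rfl : y = z := by simpa using hz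
    simpa [spPathCost] using hy
  | cons y' p ih =>
    rw [List.isChain_cons_cons] at hp
    rw [List.getLast?_cons_cons] at hz
    simpa only [spPathCost, add_assoc] using ih hp.2 (hy.tail hp.1) hz

lemma spReach_iff_exists_path {x : SPNode} {w : ℝ} :
    SPReach r c x₀ x w ↔ ∃ p : List SPNode, p.IsChain r ∧
      p.head? = some x₀ ∧ p.getLast? = some x ∧ spPathCost c p = w := by
  constructor
  · intro h
    induction h with
    | refl => exact ⟨[x₀], List.isChain_singleton _, rfl, rfl, rfl⟩
    | @tail x y w _ hxy ih =>
      obtain ⟨p, hp, hhead, hlast, rfl⟩ := ih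
      refine ⟨p ++ [y], hp.append (List.isChain_singleton y) ?_, ?_, List.getLast?_concat,
        spPathCost_concat hlast y⟩
      · simpa [hlast] using hxy
      · simp [List.head?_append, hhead]
  · rintro ⟨_ | ⟨y, p⟩, hp, hhead, hlast, rfl⟩
    · simp at hhead
    · obtain rfl : y = x₀ := by simpa using hhead
      simpa using spReach_of_isChain hp .refl hlast

end Paths

open Function

section Columns

variable {f : ℕ → ℝ} {s : ℝ} {pi mu : ℕ → ℝ} {b u : ℕ → Bool}

lemma spAge_update_of_lt {t t' : ℕ} (h : t < t') (v : Bool) :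
    spAge (update u t' v) t = spAge u t := by
  induction t with
  | zero => rfl
  | succ t ih => simp only [spAge, update_of_ne h.ne, ih (by omega)]

lemma spAge_update_succ_self (t : ℕ) (v : Bool) :
    spAge (update u (t + 1) v) (t + 1) = if v then 0 else spAge u t + 1 := by
  simp [spAge, spAge_update_of_lt (Nat.lt_succ_self t)]

lemma spObj_succ (t : ℕ) :
    spObj (t + 1) f s pi mu b u = spObj t f s pi mu b u +
      ((if b (t + 1) then f (spAge u (t + 1)) - s * pi (t + 1) else 0) -
        if u (t + 1) then s * mu (t + 1) else 0) :=
  Finset.sum_Icc_succ_top (Nat.le_add_left 1 t) _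

lemma spObj_update_of_lt {t t' : ℕ} (h : t < t') (vb vu : Bool) :
    spObj t f s pi mu (update b t' vb) (update u t' vu) = spObj t f s pi mu b u := by
  refine Finset.sum_congr rfl fun x hx => ?_
  have hx : x < t' := by simp only [Finset.mem_Icc] at hx; omega
  rw [update_of_ne hx.ne, update_of_ne hx.ne, spAge_update_of_lt hx]

lemma spObj_update_succ (t : ℕ) (vb vu : Bool) :
    spObj (t + 1) f s pi mu (update b (t + 1) vb) (update u (t + 1) vu) =
      spObj t f s pi mu b u +
        ((if vb then f (if vu then 0 else spAge u t + 1) - s * pi (t + 1) else 0) -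
          if vu then s * mu (t + 1) else 0) := by
  rw [spObj_succ, spObj_update_of_lt (Nat.lt_succ_self t), update_self, update_self,
    spAge_update_succ_self]

lemma spFeasCol_update_succ {t : ℕ} (h : spFeasCol t b u) {vb vu : Bool}
    (hu : vu = true → vb = true) (hb : vb = true → vu = true ∨ (1 ≤ t ∧ b t = true)) :
    spFeasCol (t + 1) (update b (t + 1) vb) (update u (t + 1) vu) := by
  constructor
  · intro t' h1 h2
    rcases (Nat.lt_or_eq_of_le h2) with hlt | rfl
    · rw [update_of_ne hlt.ne, update_of_ne hlt.ne]
      exact h.1 t' h1 (by omega)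
    · simpa using hu
  · intro t' h1 h2
    rcases (Nat.lt_or_eq_of_le h2) with hlt | rfl
    · rw [update_of_ne hlt.ne, update_of_ne hlt.ne, update_of_ne (by omega)]
      exact h.2 t' h1 (by omega)
    · simpa [update_of_ne (Nat.lt_succ_self t).ne] using hb

end Columns

def spNodeSlot : SPNode → ℕ
  | .inl t => t
  | .inr (t, _) => t

/-- The node `α_{t,a}` records that the column caches the item in slot `t` at age `a`;
the nodes `n_t` record nothing, since a path may pass through `α_{t,a}` and then `n_t`. -/
def SPConsistent (b u : ℕ → Bool) : SPNode → Prop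
  | .inl _ => True
  | .inr (t, a) => 1 ≤ t ∧ b t = true ∧ spAge u t = a

section Correspondence

variable {T : ℕ} {f : ℕ → ℝ} {s : ℝ} {pi mu : ℕ → ℝ}

theorem exists_spFeasCol_of_spReach {x : SPNode} {w : ℝ}
    (h : SPReach (spArc T) (spCost f s pi mu) (.inl 0) x w) :
    ∃ b u, spFeasCol (spNodeSlot x) b u ∧ SPConsistent b u x ∧
      spObj (spNodeSlot x) f s pi mu b u = -w := by
  induction h with
  | refl =>
    simp only [spNodeSlot]
    exact ⟨fun _ => false, fun _ => false, ⟨fun _ _ _ => by omega, fun _ _ _ => by omega⟩,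
      trivial, by simp [spObj]⟩
  | @tail x y w _ hxy ih =>
    obtain ⟨b, u, hfeas, hcons, hobj⟩ := ih
    rcases x with t | ⟨t, a⟩ <;> rcases y with t' | ⟨t', a'⟩ <;>
      simp only [spNodeSlot] at hfeas hobj ⊢
    · obtain ⟨rfl, -⟩ := hxy
      refine ⟨update b (t + 1) false, update u (t + 1) false,
        spFeasCol_update_succ hfeas (by simp) (by simp), trivial, ?_⟩
      simp [spObj_update_succ, spCost, hobj]
    · obtain ⟨rfl, -, rfl⟩ := hxy
      refine ⟨update b (t + 1) true, update u (t + 1) true,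
        spFeasCol_update_succ hfeas (by simp) (by simp),
        ⟨by omega, by simp, by simp [spAge_update_succ_self]⟩, ?_⟩
      rw [spObj_update_succ, hobj]
      simp [spCost]
      ring
    · obtain rfl : t' = t := hxy
      exact ⟨b, u, hfeas, trivial, by simpa [spCost] using hobj⟩
    · obtain ⟨rfl, -, rfl⟩ := hxy
      obtain ⟨ht, hbt, rfl⟩ := hcons
      refine ⟨update b (t + 1) true, update u (t + 1) false,
        spFeasCol_update_succ hfeas (by simp) (fun _ => .inr ⟨ht, hbt⟩),
        ⟨by omega, by simp, by simp [spAge_update_succ_self]⟩, ?_⟩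
      rw [spObj_update_succ, hobj]
      simp [spCost]
      ring

lemma SPReach.leave {x₀ x : SPNode} {w : ℝ}
    (h : SPReach (spArc T) (spCost f s pi mu) x₀ x w) :
    SPReach (spArc T) (spCost f s pi mu) x₀ (.inl (spNodeSlot x)) w := by
  rcases x with t | ⟨t, a⟩
  · exact h
  · simpa [spCost, spNodeSlot] using h.tail (y := .inl t) rfl

def spColNode (b u : ℕ → Bool) (t : ℕ) : SPNode :=
  if 1 ≤ t ∧ b t = true then .inr (t, spAge u t) else .inl t

lemma spNodeSlot_spColNode (b u : ℕ → Bool) (t : ℕ) : spNodeSlot (spColNode b u t) = t := by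
  unfold spColNode; split_ifs <;> rfl

theorem spReach_spColNode {b u : ℕ → Bool} (hfeas : spFeasCol T b u) {t : ℕ} (ht : t ≤ T) :
    SPReach (spArc T) (spCost f s pi mu) (.inl 0) (spColNode b u t) (-spObj t f s pi mu b u) := by
  induction t with
  | zero => simpa [spColNode, spObj] using SPReach.refl
  | succ t ih =>
    have ih := ih (by omega)
    have hout := ih.leave
    rw [spNodeSlot_spColNode] at hout
    rw [spObj_succ, neg_add]
    cases hb : b (t + 1) with
    | false =>
      have hu : u (t + 1) = false := by
        simpa [hb] using mt (hfeas.1 (t + 1) (by omega) ht)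
      simpa [spColNode, hb, hu, spCost] using hout.tail (y := .inl (t + 1)) ⟨rfl, ht⟩
    | true =>
      cases hu : u (t + 1) with
      | true =>
        convert hout.tail (y := .inr (t + 1, 0)) ⟨rfl, ht, rfl⟩ using 1
        · simp [spColNode, hb, hu, spAge]
        · simp [hu, spAge, spCost]
          ring
      | false =>
        have hbt : 1 ≤ t ∧ b t = true := by
          simpa [hu] using hfeas.2 (t + 1) (by omega) ht hb
        rw [spColNode, if_pos hbt] at ih
        have := ih.tail (y := .inr (t + 1, spAge u t + 1)) ⟨rfl, ht, rfl⟩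
        simpa [spColNode, hb, hu, spAge, spCost, add_comm] using this

end Correspondence

/-- In the single-item subproblem DAG with arc costs equal to minus the
per-slot utility plus dual-price terms, the set of costs of `n_0`–`n_T` paths is
exactly the set of negated reduced-cost objectives of feasible columns; hence the
minimum-cost path equals the minimum over all columns of minus the reduced-cost
objective, i.e. the maximum reduced-cost column corresponds to a shortest path. -/
theorem subproblem_is_shortest_path
    (T : ℕ) (f : ℕ → ℝ) (s : ℝ) (pi mu : ℕ → ℝ) :
    {c : ℝ | ∃ p : List SPNode, List.Chain' (spArc T) p ∧
        p.head? = some (Sum.inl 0) ∧ p.getLast? = some (Sum.inl T) ∧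
        spPathCost (spCost f s pi mu) p = c}
      = (fun v => -v) '' {v : ℝ | ∃ b u : ℕ → Bool,
          spFeasCol T b u ∧ spObj T f s pi mu b u = v} := by
  ext c
  refine spReach_iff_exists_path.symm.trans ⟨fun h => ?_, ?_⟩
  · obtain ⟨b, u, hfeas, -, hobj⟩ := exists_spFeasCol_of_spReach h
    exact ⟨_, ⟨b, u, hfeas, hobj⟩, neg_neg c⟩
  · rintro ⟨_, ⟨b, u, hfeas, rfl⟩, rfl⟩
    have hpath := spReach_spColNode (f := f) (s := s) (pi := pi) (mu := mu) hfeas le_rfl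
    simpa [spNodeSlot_spColNode] using hpath.leave
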